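/- arXiv:2106.04923 — 3 statements merged into one kernel-verified Lean document; each statement's English description precedes it below -/
import Mathlib

section
/- Let Z be a compact metric standard Borel space, let Y be a finite metric space, equip Z × Y with a metric making it a compact metric space of diameter diam(Z × Y), and let P_t and P_f be Borel probability measures on Z × Y having the same marginal μ on Z, with P_t ≪ P_f. Then W(P_t, P_f) ≤ diam(Z × Y) · sqrt((1/2) · ∫_Z KL(P_t_{Y|z} ‖ P_f_{Y|z}) dμ(z)), where P_t_{Y|z} and P_f_{Y|z} are the conditional distributions on Y given z obtained by disintegrating P_t and P_f with respect to the projection onto Z. -/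
open MeasureTheory ProbabilityTheory
open scoped ENNReal

/-- Dual 1-Wasserstein distance with respect to an explicit distance function `d`:
the supremum over all functions `φ : X → ℝ` that are 1-Lipschitz for `d` of
`∫ φ dμ − ∫ φ dν`. -/
noncomputable def Wd {X : Type*} [MeasurableSpace X] (d : X → X → ℝ)
    (μ ν : Measure X) : ℝ :=
  sSup {r : ℝ | ∃ φ : X → ℝ, (∀ a b : X, |φ a - φ b| ≤ d a b) ∧
    r = ∫ x, φ x ∂μ - ∫ x, φ x ∂ν}

open Classical in
/-- Kullback–Leibler divergence: `∫ log (dP/dQ) dP` when `P ≪ Q` (and the integrand is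
integrable), and `+∞` otherwise. -/
noncomputable def KL {X : Type*} [MeasurableSpace X] (P Q : Measure X) : ℝ≥0∞ :=
  if P ≪ Q ∧ Integrable (fun x => Real.log (P.rnDeriv Q x).toReal) P
  then ENNReal.ofReal (∫ x, Real.log (P.rnDeriv Q x).toReal ∂P)
  else ⊤

/-!
Disintegrate `P_t` and `P_f` over their common `Z`-marginal `μ`. A test function that is
1-Lipschitz for the metric on `Z × Y` has oscillation at most `diam (Z × Y)` on every fibre
`{z} × Y`, so the two fibre integrals differ by at most `diam (Z × Y) · TV(P_t(·|z), P_f(·|z))`.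
Pinsker's inequality `TV ≤ √(KL / 2)` on the finite space `Y` (from the scalar bound
`3 (x - 1)² ≤ (2 x + 4) (x log x - x + 1)` and Cauchy–Schwarz) and Jensen's inequality for `√`
under `μ` finish the proof.
-/

open InformationTheory Real Finset Set

lemma monotoneOn_add_one_mul_log_sub_two_mul :
    MonotoneOn (fun x => (x + 1) * log x - 2 * (x - 1)) (Ioi 0) := by
  have hderiv : ∀ x ∈ Ioi (0 : ℝ), HasDerivAt (fun x => (x + 1) * log x - 2 * (x - 1))
      (log x + (1 + x⁻¹) - 2) x := fun x hx =>
    ((((hasDerivAt_id x).add_const 1).mul (hasDerivAt_log hx.ne')).sub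
      (((hasDerivAt_id x).sub_const 1).const_mul 2)).congr_deriv
      (by simp [add_mul, mul_inv_cancel₀ (mem_Ioi.1 hx).ne'])
  refine monotoneOn_of_hasDerivWithinAt_nonneg (convex_Ioi 0)
    (fun x hx => (hderiv x hx).continuousAt.continuousWithinAt)
    (fun x hx => (hderiv x (interior_subset hx)).hasDerivWithinAt) fun x hx => ?_
  rw [interior_Ioi] at hx
  have := log_le_sub_one_of_pos (inv_pos.2 hx)
  rw [log_inv] at this
  linarith

lemma sq_sub_one_le_mul_klFun {x : ℝ} (hx : 0 ≤ x) :
    3 * (x - 1) ^ 2 ≤ (2 * x + 4) * klFun x := by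
  set g : ℝ → ℝ := fun x => (2 * x + 4) * klFun x - 3 * (x - 1) ^ 2
  have hcont : Continuous g := by fun_prop (disch := exact continuous_klFun)
  have hderiv (x : ℝ) (hx : 0 < x) :
      HasDerivAt g (4 * ((x + 1) * log x - 2 * (x - 1))) x := by
    refine ((((hasDerivAt_id x).const_mul 2).add_const 4).mul (hasDerivAt_klFun hx.ne')).sub
      ((((hasDerivAt_id x).sub_const 1).pow 2).const_mul 3) |>.congr_deriv ?_
    simp only [klFun_apply, id]; ring
  have hdiff : ∀ s : Set ℝ, s ⊆ Ioi 0 → DifferentiableOn ℝ g s := fun s hs x hx =>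
    (hderiv x (hs hx)).differentiableAt.differentiableWithinAt
  have h_mono := monotoneOn_add_one_mul_log_sub_two_mul
  suffices g 1 ≤ g x by simpa [g, klFun_one] using this
  -- `g'` has the sign of `x - 1` by the previous lemma, so `g` is minimal at `1`
  rcases le_total x 1 with hx1 | hx1
  · refine antitoneOn_of_deriv_nonpos (convex_Icc 0 1) hcont.continuousOn
      (hdiff _ (by simpa using Set.Ioo_subset_Ioi_self)) (fun y hy => ?_)
      ⟨hx, hx1⟩ ⟨zero_le_one, le_rfl⟩ hx1
    rw [interior_Icc] at hy
    have := h_mono hy.1 (mem_Ioi.2 one_pos) hy.2.le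
    simp only [log_one] at this
    rw [(hderiv y hy.1).deriv]
    linarith
  · refine monotoneOn_of_deriv_nonneg (convex_Ici 1) hcont.continuousOn
      (hdiff _ (by simp)) (fun y hy => ?_) self_mem_Ici hx1 hx1
    rw [interior_Ici] at hy
    have := h_mono (mem_Ioi.2 one_pos) (mem_Ioi.2 (zero_lt_one.trans hy)) hy.le
    simp only [log_one] at this
    rw [(hderiv y (zero_lt_one.trans hy)).deriv]
    linarith

lemma mul_klFun_div_eq {p q : ℝ} (hpq : q = 0 → p = 0) :
    q * klFun (p / q) = p * log (p / q) + q - p := by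
  rcases eq_or_ne q 0 with rfl | hq
  · simp [hpq rfl]
  · rw [klFun_apply]; field_simp

lemma three_mul_sq_sub_le_mul_klFun_div {p q : ℝ} (hp : 0 ≤ p) (hq : 0 ≤ q)
    (hpq : q = 0 → p = 0) : 3 * (p - q) ^ 2 ≤ (2 * p + 4 * q) * (q * klFun (p / q)) := by
  rcases hq.eq_or_lt with rfl | hq
  · simp [hpq rfl]
  obtain ⟨x, hx, rfl⟩ : ∃ x, 0 ≤ x ∧ p = q * x := ⟨p / q, div_nonneg hp hq.le, by field_simp⟩
  rw [mul_div_cancel_left₀ _ hq.ne']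
  linear_combination q ^ 2 * sq_sub_one_le_mul_klFun hx

lemma sq_sum_abs_sub_le_two_mul_sum_mul_log {ι : Type*} (s : Finset ι) {p q : ι → ℝ}
    (hp : ∀ i ∈ s, 0 ≤ p i) (hq : ∀ i ∈ s, 0 ≤ q i) (hps : ∑ i ∈ s, p i = 1)
    (hqs : ∑ i ∈ s, q i = 1) (hpq : ∀ i ∈ s, q i = 0 → p i = 0) :
    (∑ i ∈ s, |p i - q i|) ^ 2 ≤ 2 * ∑ i ∈ s, p i * log (p i / q i) := by
  -- Cauchy–Schwarz, with the weights `(2 p + 4 q) / 3` summing to `2`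
  have hCS := sum_sq_le_sum_mul_sum_of_sq_le_mul s (r := fun i => |p i - q i|)
    (f := fun i => (2 * p i + 4 * q i) / 3) (g := fun i => q i * klFun (p i / q i))
    (fun i hi => by have := hp i hi; have := hq i hi; positivity)
    (fun i hi => mul_nonneg (hq i hi) (klFun_nonneg (div_nonneg (hp i hi) (hq i hi))))
    (fun i hi => by
      have := three_mul_sq_sub_le_mul_klFun_div (hp i hi) (hq i hi) (hpq i hi)
      rw [sq_abs]; linarith)
  have hf : ∑ i ∈ s, (2 * p i + 4 * q i) / 3 = 2 := by
    rw [← sum_div, sum_add_distrib, ← mul_sum, ← mul_sum, hps, hqs]; norm_num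
  have hg : ∑ i ∈ s, q i * klFun (p i / q i) = ∑ i ∈ s, p i * log (p i / q i) := by
    rw [sum_congr rfl fun i hi => mul_klFun_div_eq (hpq i hi), sum_sub_distrib,
      sum_add_distrib, hps, hqs, add_sub_cancel_right]
  rwa [hf, hg] at hCS

lemma abs_sum_sub_mul_le {ι : Type*} [Fintype ι] [Nonempty ι] {p q g : ι → ℝ} {D : ℝ}
    (hpq : ∑ i, p i = ∑ i, q i) (hg : ∀ i j, |g i - g j| ≤ D) :
    |∑ i, (p i - q i) * g i| ≤ D / 2 * ∑ i, |p i - q i| := by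
  obtain ⟨i₀, -, hi₀⟩ := exists_max_image univ g univ_nonempty
  obtain ⟨i₁, -, hi₁⟩ := exists_min_image univ g univ_nonempty
  -- centre `g` at the midpoint of its range, which the zero-sum weights `p - q` do not see
  obtain ⟨c, hc⟩ : ∃ c, ∀ i, |g i - c| ≤ D / 2 := ⟨(g i₀ + g i₁) / 2, fun i => by
    have := hi₀ i (mem_univ i); have := hi₁ i (mem_univ i)
    have := (le_abs_self _).trans (hg i₀ i₁)
    rw [abs_le]; constructor <;> linarith⟩
  have hcentre : ∑ i, (p i - q i) * g i = ∑ i, (p i - q i) * (g i - c) := by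
    simp only [mul_sub, sum_sub_distrib, ← sum_mul, hpq, sub_self, zero_mul, sub_zero]
  calc |∑ i, (p i - q i) * g i| = |∑ i, (p i - q i) * (g i - c)| := by rw [hcentre]
    _ ≤ ∑ i, |p i - q i| * (D / 2) := by
      refine (abs_sum_le_sum_abs _ _).trans (sum_le_sum fun i _ => ?_)
      rw [abs_mul]; exact mul_le_mul_of_nonneg_left (hc i) (abs_nonneg _)
    _ = D / 2 * ∑ i, |p i - q i| := by rw [← sum_mul, mul_comm]

lemma lintegral_le_rpow_lintegral_sq {α : Type*} [MeasurableSpace α] (μ : Measure α)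
    [IsProbabilityMeasure μ] (f : α → ℝ≥0∞) :
    ∫⁻ a, f a ∂μ ≤ (∫⁻ a, f a ^ 2 ∂μ) ^ (1 / 2 : ℝ) := by
  -- Hölder against `1`, applied to a measurable minorant of `f` with the same integral
  obtain ⟨g, hg, hgf, hfg⟩ := exists_measurable_le_lintegral_eq μ f
  have hHolder := ENNReal.lintegral_mul_le_Lp_mul_Lq μ Real.HolderConjugate.two_two
    hg.aemeasurable (aemeasurable_const (b := 1))
  simp only [Pi.mul_apply, mul_one, lintegral_const, measure_univ, ENNReal.rpow_two, one_pow,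
    ENNReal.one_rpow] at hHolder
  rw [hfg]
  exact hHolder.trans (by gcongr with a; exact hgf a)

section FiniteSpace

variable {Y : Type*} [Fintype Y] [MeasurableSpace Y]

noncomputable def tvDist (P Q : Measure Y) : ℝ := 2⁻¹ * ∑ y, |P.real {y} - Q.real {y}|

variable [MeasurableSingletonClass Y]

lemma KL_eq_ofReal_sum {P Q : Measure Y} [IsFiniteMeasure P] [IsFiniteMeasure Q]
    (hPQ : P ≪ Q) :
    KL P Q = ENNReal.ofReal (∑ y, P.real {y} * log (P.real {y} / Q.real {y})) := by
  rw [KL, if_pos ⟨hPQ, .of_finite⟩, integral_fintype .of_finite]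
  congr 1
  refine sum_congr rfl fun y _ => ?_
  rw [smul_eq_mul]
  rcases eq_or_ne (P {y}) 0 with hPy | hPy
  · simp [measureReal_def, hPy]
  have hQy : Q {y} ≠ 0 := fun h => hPy (hPQ h)
  have hrn : P {y} = P.rnDeriv Q y * Q {y} := by
    conv_lhs => rw [← Measure.withDensity_rnDeriv_eq P Q hPQ]
    rw [withDensity_apply _ (measurableSet_singleton y), lintegral_singleton]
  congr 2
  rw [measureReal_def, measureReal_def, ← ENNReal.toReal_div, hrn,
    ENNReal.mul_div_cancel_right hQy (measure_ne_top Q _)]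

lemma ofReal_tvDist_sq_le_KL (P Q : Measure Y) [IsProbabilityMeasure P]
    [IsProbabilityMeasure Q] :
    ENNReal.ofReal (tvDist P Q) ^ 2 ≤ 2⁻¹ * KL P Q := by
  by_cases hPQ : P ≪ Q
  swap
  · rw [KL, if_neg fun h => hPQ h.1, ENNReal.mul_top (by norm_num)]; exact le_top
  have hpin := sq_sum_abs_sub_le_two_mul_sum_mul_log univ (p := fun y => P.real {y})
    (q := fun y => Q.real {y}) (fun _ _ => measureReal_nonneg) (fun _ _ => measureReal_nonneg)
    (by simp) (by simp) fun y _ hy => by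
      rw [measureReal_eq_zero_iff] at hy ⊢; exact hPQ hy
  rw [KL_eq_ofReal_sum hPQ, ← ENNReal.ofReal_pow (by unfold tvDist; positivity),
    show (2⁻¹ : ℝ≥0∞) = ENNReal.ofReal 2⁻¹ by simp, ← ENNReal.ofReal_mul (by norm_num)]
  refine ENNReal.ofReal_le_ofReal ?_
  rw [tvDist]
  linarith

lemma abs_integral_sub_integral_le_mul_tvDist [Nonempty Y] (P Q : Measure Y)
    [IsProbabilityMeasure P] [IsProbabilityMeasure Q] {g : Y → ℝ} {D : ℝ}
    (hg : ∀ y y', |g y - g y'| ≤ D) :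
    |∫ y, g y ∂P - ∫ y, g y ∂Q| ≤ D * tvDist P Q := by
  rw [integral_fintype .of_finite, integral_fintype .of_finite, ← sum_sub_distrib, tvDist,
    ← mul_assoc, ← div_eq_mul_inv]
  simp only [smul_eq_mul, ← sub_mul]
  exact abs_sum_sub_mul_le (by simp) hg

lemma lintegral_ofReal_tvDist_le {Z : Type*} [MeasurableSpace Z] (μ : Measure Z)
    [IsProbabilityMeasure μ] (κ η : Kernel Z Y) [IsMarkovKernel κ] [IsMarkovKernel η] :
    ∫⁻ z, ENNReal.ofReal (tvDist (κ z) (η z)) ∂μ ≤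
      (2⁻¹ * ∫⁻ z, KL (κ z) (η z) ∂μ) ^ (1 / 2 : ℝ) :=
  calc ∫⁻ z, ENNReal.ofReal (tvDist (κ z) (η z)) ∂μ
      ≤ (∫⁻ z, ENNReal.ofReal (tvDist (κ z) (η z)) ^ 2 ∂μ) ^ (1 / 2 : ℝ) :=
        lintegral_le_rpow_lintegral_sq μ _
    _ ≤ (∫⁻ z, 2⁻¹ * KL (κ z) (η z) ∂μ) ^ (1 / 2 : ℝ) := by
        gcongr with z; exact ofReal_tvDist_sq_le_KL _ _
    _ = (2⁻¹ * ∫⁻ z, KL (κ z) (η z) ∂μ) ^ (1 / 2 : ℝ) := by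
        rw [lintegral_const_mul' _ _ (by simp)]

end FiniteSpace

lemma integral_sub_integral_eq_integral_condKernel {α Ω E : Type*} [MeasurableSpace α]
    [MeasurableSpace Ω] [StandardBorelSpace Ω] [Nonempty Ω] [NormedAddCommGroup E]
    [NormedSpace ℝ E] {ρ ρ' : Measure (α × Ω)} [IsFiniteMeasure ρ] [IsFiniteMeasure ρ']
    (hfst : ρ.fst = ρ'.fst) {f : α × Ω → E} (hf : Integrable f ρ) (hf' : Integrable f ρ') :
    ∫ x, f x ∂ρ - ∫ x, f x ∂ρ' =
      ∫ a, (∫ ω, f (a, ω) ∂ρ.condKernel a - ∫ ω, f (a, ω) ∂ρ'.condKernel a) ∂ρ.fst := by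
  have hf'_fst := hf'.integral_condKernel
  rw [← hfst] at hf'_fst
  rw [integral_sub hf.integral_condKernel hf'_fst, Measure.integral_condKernel hf, hfst,
    Measure.integral_condKernel hf']

section Wasserstein

variable {X : Type*} [MeasurableSpace X] {d : X → X → ℝ} {μ ν : Measure X}

lemma integral_add_const_of_not_integrable [IsFiniteMeasure μ] {f : X → ℝ}
    (hf : ¬ Integrable f μ) (c : ℝ) : ∫ x, f x + c ∂μ = 0 :=
  integral_undef fun h => hf ((h.sub (integrable_const c)).congr (ae_of_all _ fun x => by simp))

lemma Wd_le_of_forall_integrable [IsProbabilityMeasure μ] [IsProbabilityMeasure ν] {B : ℝ}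
    (hB : 0 ≤ B)
    (h : ∀ φ : X → ℝ, (∀ a b, |φ a - φ b| ≤ d a b) → Integrable φ μ → Integrable φ ν →
      ∫ x, φ x ∂μ - ∫ x, φ x ∂ν ≤ B) :
    Wd d μ ν ≤ B := by
  by_cases hbdd : BddAbove {r : ℝ | ∃ φ : X → ℝ, (∀ a b : X, |φ a - φ b| ≤ d a b) ∧
    r = ∫ x, φ x ∂μ - ∫ x, φ x ∂ν}
  swap
  · rw [Wd, Real.sSup_of_not_bddAbove hbdd]; exact hB
  refine Real.sSup_le ?_ hB
  rintro r ⟨φ, hφ, rfl⟩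
  obtain ⟨b, hb⟩ := hbdd
  -- if exactly one integral is the junk value `0`, shifting `φ` by constants escapes any bound
  have hshift : ∀ c, ∫ x, φ x + c ∂μ - ∫ x, φ x + c ∂ν ≤ b := fun c =>
    hb ⟨fun x => φ x + c, fun x y => by simpa using hφ x y, rfl⟩
  by_cases hμ : Integrable φ μ <;> by_cases hν : Integrable φ ν
  · exact h φ hφ hμ hν
  · have := hshift (b + 1 - ∫ x, φ x ∂μ)
    rw [integral_add hμ (integrable_const _), integral_add_const_of_not_integrable hν,
      integral_const, probReal_univ, one_smul] at this
    linarith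
  · have := hshift (-b - 1 - ∫ x, φ x ∂ν)
    rw [integral_add hν (integrable_const _), integral_add_const_of_not_integrable hμ,
      integral_const, probReal_univ, one_smul] at this
    linarith
  · rw [integral_undef hμ, integral_undef hν, sub_zero]; exact hB

lemma ofReal_Wd_le_of_forall_integrable [IsProbabilityMeasure μ] [IsProbabilityMeasure ν]
    {R : ℝ≥0∞}
    (h : ∀ φ : X → ℝ, (∀ a b, |φ a - φ b| ≤ d a b) → Integrable φ μ → Integrable φ ν →
      ENNReal.ofReal (∫ x, φ x ∂μ - ∫ x, φ x ∂ν) ≤ R) :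
    ENNReal.ofReal (Wd d μ ν) ≤ R := by
  rcases eq_or_ne R ⊤ with rfl | hR
  · exact le_top
  rw [ENNReal.ofReal_le_iff_le_toReal hR]
  exact Wd_le_of_forall_integrable ENNReal.toReal_nonneg fun φ hφ hμ hν =>
    (ENNReal.ofReal_le_iff_le_toReal hR).1 (h φ hφ hμ hν)

end Wasserstein

theorem wasserstein_le_diam_sqrt_conditional_kl_general {Z Y : Type*}
    [MeasurableSpace Z]
    [Fintype Y] [MeasurableSpace Y] [DiscreteMeasurableSpace Y]
    [Nonempty Y]
    (m : MetricSpace (Z × Y))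
    (hcomp : @CompactSpace (Z × Y) m.toPseudoMetricSpace.toUniformSpace.toTopologicalSpace)
    (Pt Pf : Measure (Z × Y)) [IsProbabilityMeasure Pt] [IsProbabilityMeasure Pf]
    (hmarg : Pt.fst = Pf.fst) :
    ENNReal.ofReal (Wd m.toPseudoMetricSpace.toDist.dist Pt Pf) ≤
      ENNReal.ofReal (@Metric.diam (Z × Y) m.toPseudoMetricSpace Set.univ) *
        (2⁻¹ * ∫⁻ z, KL (Pt.condKernel z) (Pf.condKernel z) ∂Pt.fst) ^ (1 / 2 : ℝ) := by
  let := m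
  set D := Metric.diam (univ : Set (Z × Y))
  have hdist : ∀ a b : Z × Y, dist a b ≤ D := fun a b =>
    Metric.dist_le_diam_of_mem isCompact_univ.isBounded trivial trivial
  refine ofReal_Wd_le_of_forall_integrable fun φ hφ hPt hPf => ?_
  have hfibre : ∀ z, |∫ y, φ (z, y) ∂Pt.condKernel z - ∫ y, φ (z, y) ∂Pf.condKernel z| ≤
      D * tvDist (Pt.condKernel z) (Pf.condKernel z) := fun z =>
    abs_integral_sub_integral_le_mul_tvDist _ _ fun y y' => (hφ _ _).trans (hdist _ _)
  calc ENNReal.ofReal (∫ x, φ x ∂Pt - ∫ x, φ x ∂Pf)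
      = ENNReal.ofReal (∫ z, (∫ y, φ (z, y) ∂Pt.condKernel z -
          ∫ y, φ (z, y) ∂Pf.condKernel z) ∂Pt.fst) := by
        rw [integral_sub_integral_eq_integral_condKernel hmarg hPt hPf]
    _ ≤ ∫⁻ z, ‖∫ y, φ (z, y) ∂Pt.condKernel z - ∫ y, φ (z, y) ∂Pf.condKernel z‖ₑ ∂Pt.fst :=
        (ofReal_le_enorm _).trans (enorm_integral_le_lintegral_enorm _)
    _ ≤ ∫⁻ z, ENNReal.ofReal D * ENNReal.ofReal (tvDist (Pt.condKernel z) (Pf.condKernel z))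
          ∂Pt.fst := lintegral_mono fun z => by
        rw [enorm_eq_ofReal_abs, ← ENNReal.ofReal_mul Metric.diam_nonneg]
        exact ENNReal.ofReal_le_ofReal (hfibre z)
    _ ≤ ENNReal.ofReal D * (2⁻¹ * ∫⁻ z, KL (Pt.condKernel z) (Pf.condKernel z) ∂Pt.fst) ^
          (1 / 2 : ℝ) := by
        rw [lintegral_const_mul' _ _ ENNReal.ofReal_ne_top]
        gcongr
        exact lintegral_ofReal_tvDist_le _ _ _

/-- For probability measures `P_t ≪ P_f` on `Z × Y` (`Z` a compact metric standard
Borel space, `Y` a finite metric space, `Z × Y` equipped with a metric `m` making it a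
compact metric space) having the same `Z`-marginal `μ = P_t.fst`:
`W(P_t, P_f) ≤ diam(Z × Y) · sqrt((1/2) · ∫_Z KL(P_t_{Y|z} ‖ P_f_{Y|z}) dμ(z))`. -/
theorem wasserstein_le_diam_sqrt_conditional_kl {Z Y : Type*}
    [MetricSpace Z] [CompactSpace Z] [MeasurableSpace Z] [BorelSpace Z]
    [StandardBorelSpace Z]
    [Fintype Y] [MetricSpace Y] [MeasurableSpace Y] [DiscreteMeasurableSpace Y]
    [Nonempty Y]
    (m : MetricSpace (Z × Y))
    (hcomp : @CompactSpace (Z × Y) m.toPseudoMetricSpace.toUniformSpace.toTopologicalSpace)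
    (Pt Pf : Measure (Z × Y)) [IsProbabilityMeasure Pt] [IsProbabilityMeasure Pf]
    (hmarg : Pt.fst = Pf.fst) (hac : Pt ≪ Pf) :
    ENNReal.ofReal (Wd m.toPseudoMetricSpace.toDist.dist Pt Pf) ≤
      ENNReal.ofReal (@Metric.diam (Z × Y) m.toPseudoMetricSpace Set.univ) *
        (2⁻¹ * ∫⁻ z, KL (Pt.condKernel z) (Pf.condKernel z) ∂Pt.fst) ^ (1 / 2 : ℝ) :=
  wasserstein_le_diam_sqrt_conditional_kl_general m hcomp Pt Pf hmarg
end

section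
/- Let Z and Y be compact subsets of real normed vector spaces, equip Z × Y with the ℓ²-product metric dist((z,y),(z',y')) = sqrt(‖z − z'‖² + ‖y − y'‖²), let κ, λ ≥ 0, let L : Y × Y → ℝ be continuous and κ-Lipschitz in each argument, and let f : Z → Y be λ-Lipschitz. Let P and Q be Borel probability measures on Z × Y, and let π be any Borel probability measure on (Z × Y) × (Z × Y) whose first marginal is P and whose second marginal is Q. Then |∫ L(f(z), y) dQ(z, y) − ∫ L(f(z), y) dP(z, y)| ≤ κ · sqrt(λ² + 1) · ∫ sqrt(‖z − z'‖² + ‖y − y'‖²) dπ((z, y), (z', y')). -/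
open MeasureTheory

/-- For a coupling `π` of two Borel probability measures `P`, `Q` on `Z × Y` (`Z`, `Y`
compact subsets of normed spaces), a loss `L` that is `κ`-Lipschitz in each argument and a
`λ`-Lipschitz classifier `f`, the risk gap is bounded by
`κ·sqrt(λ²+1) · ∫ sqrt(‖z−z'‖² + ‖y−y'‖²) dπ`. -/
theorem risk_gap_le_coupling_integral {E F : Type*}
    [NormedAddCommGroup E] [NormedSpace ℝ E] [MeasurableSpace E] [BorelSpace E]
    [NormedAddCommGroup F] [NormedSpace ℝ F] [MeasurableSpace F] [BorelSpace F]
    (Z : Set E) (Y : Set F) (hZ : IsCompact Z) (hY : IsCompact Y)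
    (κ lam : ℝ) (hκ : 0 ≤ κ) (hlam : 0 ≤ lam)
    (L : Y → Y → ℝ) (hLc : Continuous fun p : Y × Y => L p.1 p.2)
    (hL₁ : ∀ y y₁ y₂ : Y, |L y₁ y - L y₂ y| ≤ κ * ‖(y₁ : F) - (y₂ : F)‖)
    (hL₂ : ∀ y y₁ y₂ : Y, |L y y₁ - L y y₂| ≤ κ * ‖(y₁ : F) - (y₂ : F)‖)
    (f : Z → Y) (hf : ∀ z z' : Z, ‖(f z : F) - (f z' : F)‖ ≤ lam * ‖(z : E) - (z' : E)‖)
    (P Q : Measure (Z × Y)) [IsProbabilityMeasure P] [IsProbabilityMeasure Q]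
    (π : Measure ((Z × Y) × (Z × Y))) [IsProbabilityMeasure π]
    (hπ₁ : π.map Prod.fst = P) (hπ₂ : π.map Prod.snd = Q) :
    |(∫ p : Z × Y, L (f p.1) p.2 ∂Q) - ∫ p : Z × Y, L (f p.1) p.2 ∂P| ≤
      κ * Real.sqrt (lam ^ 2 + 1) *
        ∫ q : (Z × Y) × (Z × Y),
          Real.sqrt (‖(q.1.1 : E) - (q.2.1 : E)‖ ^ 2 + ‖(q.1.2 : F) - (q.2.2 : F)‖ ^ 2) ∂π := by
  haveI : CompactSpace Z := isCompact_iff_compactSpace.mp hZ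
  haveI : CompactSpace Y := isCompact_iff_compactSpace.mp hY
  -- f is Lipschitz, hence continuous
  have hfl : LipschitzWith (Real.toNNReal lam) f := by
    apply LipschitzWith.of_dist_le_mul
    intro z z'
    rw [Subtype.dist_eq, Subtype.dist_eq, dist_eq_norm, dist_eq_norm,
      Real.coe_toNNReal _ hlam]
    exact hf z z'
  set g : Z × Y → ℝ := fun p => L (f p.1) p.2 with hgdef
  have hgc : Continuous g :=
    hLc.comp ((hfl.continuous.comp continuous_fst).prodMk continuous_snd)
  -- rewrite the integrals through the coupling
  have hQ : (∫ p : Z × Y, g p ∂Q) = ∫ q : (Z × Y) × (Z × Y), g q.2 ∂π := by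
    rw [← hπ₂, integral_map measurable_snd.aemeasurable hgc.aestronglyMeasurable]
  have hP : (∫ p : Z × Y, g p ∂P) = ∫ q : (Z × Y) × (Z × Y), g q.1 ∂π := by
    rw [← hπ₁, integral_map measurable_fst.aemeasurable hgc.aestronglyMeasurable]
  have hint : ∀ h : (Z × Y) × (Z × Y) → ℝ, Continuous h → Integrable h π := fun h hc =>
    hc.integrable_of_hasCompactSupport (HasCompactSupport.of_compactSpace h)
  have hi2 : Integrable (fun q : (Z × Y) × (Z × Y) => g q.2) π :=
    hint _ (hgc.comp continuous_snd)
  have hi1 : Integrable (fun q : (Z × Y) × (Z × Y) => g q.1) π :=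
    hint _ (hgc.comp continuous_fst)
  have hdist : Continuous fun q : (Z × Y) × (Z × Y) =>
      Real.sqrt (‖(q.1.1 : E) - (q.2.1 : E)‖ ^ 2 + ‖(q.1.2 : F) - (q.2.2 : F)‖ ^ 2) := by
    apply Real.continuous_sqrt.comp
    apply Continuous.add
    · exact ((continuous_subtype_val.comp (continuous_fst.comp continuous_fst)).sub
        (continuous_subtype_val.comp (continuous_fst.comp continuous_snd))).norm.pow 2
    · exact ((continuous_subtype_val.comp (continuous_snd.comp continuous_fst)).sub
        (continuous_subtype_val.comp (continuous_snd.comp continuous_snd))).norm.pow 2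
  -- pointwise bound
  have key : ∀ q : (Z × Y) × (Z × Y), |g q.2 - g q.1| ≤
      κ * Real.sqrt (lam ^ 2 + 1) *
        Real.sqrt (‖(q.1.1 : E) - (q.2.1 : E)‖ ^ 2 + ‖(q.1.2 : F) - (q.2.2 : F)‖ ^ 2) := by
    rintro ⟨⟨z, y⟩, ⟨z', y'⟩⟩
    simp only [hgdef]
    set a : ℝ := ‖(z : E) - (z' : E)‖ with ha
    set b : ℝ := ‖(y : F) - (y' : F)‖ with hb
    have ha0 : 0 ≤ a := norm_nonneg _
    have hb0 : 0 ≤ b := norm_nonneg _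
    have step1 : |L (f z') y' - L (f z) y| ≤ κ * (lam * a + b) := by
      have h1 : |L (f z') y' - L (f z') y| ≤ κ * b := by
        have := hL₂ (f z') y' y
        rwa [norm_sub_rev] at this
      have h2 : |L (f z') y - L (f z) y| ≤ κ * (lam * a) := by
        have h := hL₁ y (f z') (f z)
        have h' : ‖(f z' : F) - (f z : F)‖ ≤ lam * a := by
          have := hf z' z
          rwa [norm_sub_rev (z' : E)] at this
        calc |L (f z') y - L (f z) y| ≤ κ * ‖(f z' : F) - (f z : F)‖ := h
          _ ≤ κ * (lam * a) := by nlinarith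
      calc |L (f z') y' - L (f z) y|
          ≤ |L (f z') y' - L (f z') y| + |L (f z') y - L (f z) y| := abs_sub_le _ _ _
        _ ≤ κ * b + κ * (lam * a) := add_le_add h1 h2
        _ = κ * (lam * a + b) := by ring
    have step2 : lam * a + b ≤ Real.sqrt (lam ^ 2 + 1) * Real.sqrt (a ^ 2 + b ^ 2) := by
      have hs : lam * a + b = Real.sqrt ((lam * a + b) ^ 2) := by
        rw [Real.sqrt_sq (by positivity)]
      rw [hs, ← Real.sqrt_mul (by positivity)]
      apply Real.sqrt_le_sqrt
      nlinarith [sq_nonneg (a - lam * b)]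
    calc |L (f z') y' - L (f z) y| ≤ κ * (lam * a + b) := step1
      _ ≤ κ * (Real.sqrt (lam ^ 2 + 1) * Real.sqrt (a ^ 2 + b ^ 2)) := by
          apply mul_le_mul_of_nonneg_left step2 hκ
      _ = κ * Real.sqrt (lam ^ 2 + 1) * Real.sqrt (a ^ 2 + b ^ 2) := by ring
  calc |(∫ p : Z × Y, g p ∂Q) - ∫ p : Z × Y, g p ∂P|
      = |∫ q : (Z × Y) × (Z × Y), (g q.2 - g q.1) ∂π| := by
        rw [hQ, hP, integral_sub hi2 hi1]
    _ ≤ ∫ q : (Z × Y) × (Z × Y), |g q.2 - g q.1| ∂π := by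
        simpa [Real.norm_eq_abs] using
          norm_integral_le_integral_norm (μ := π) fun q : (Z × Y) × (Z × Y) => g q.2 - g q.1
    _ ≤ ∫ q : (Z × Y) × (Z × Y), κ * Real.sqrt (lam ^ 2 + 1) *
          Real.sqrt (‖(q.1.1 : E) - (q.2.1 : E)‖ ^ 2 + ‖(q.1.2 : F) - (q.2.2 : F)‖ ^ 2) ∂π := by
        apply integral_mono (hi2.sub hi1).abs
        · exact hint _ (continuous_const.mul hdist)
        · exact key
    _ = κ * Real.sqrt (lam ^ 2 + 1) *
        ∫ q : (Z × Y) × (Z × Y),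
          Real.sqrt (‖(q.1.1 : E) - (q.2.1 : E)‖ ^ 2 + ‖(q.1.2 : F) - (q.2.2 : F)‖ ^ 2) ∂π := by
        rw [integral_const_mul]
end

section
/- Let Z and Y be compact subsets of real normed vector spaces, equip Z × Y with the ℓ²-product metric dist((z,y),(z',y')) = sqrt(‖z − z'‖² + ‖y − y'‖²), let κ, λ ≥ 0, let L : Y × Y → ℝ be continuous and κ-Lipschitz in each argument, let f : Z → Y be λ-Lipschitz, and let P_t, Q_t, P̂, Q̂ be Borel probability measures on Z × Y (P̂ and Q̂ playing the role of empirical measures). Suppose W(P̂, P_t) ≤ ε₁ and W(Q̂, Q_t) ≤ ε₂ for some ε₁, ε₂ ≥ 0. Then |R_{Q_t}(f) − R_{P_t}(f)| ≤ κ · sqrt(λ² + 1) · ( W(P̂, Q̂) + ε₁ + ε₂ ), where R_{P_t}(f) := ∫ L(f(z), y) dP_t(z, y) and R_{Q_t}(f) := ∫ L(f(z), y) dQ_t(z, y). -/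
open MeasureTheory

/-- Dual 1-Wasserstein distance on `Z × Y` for the ℓ²-product metric
`dist((z,y),(z',y')) = sqrt(‖z−z'‖² + ‖y−y'‖²)`: the supremum over all functions
`φ : Z × Y → ℝ` that are 1-Lipschitz for this metric of `∫ φ dμ − ∫ φ dν`. -/
noncomputable def W2 {E F : Type*} [NormedAddCommGroup E] [MeasurableSpace E]
    [NormedAddCommGroup F] [MeasurableSpace F] {Z : Set E} {Y : Set F}
    (μ ν : Measure (Z × Y)) : ℝ :=
  sSup {r : ℝ | ∃ φ : Z × Y → ℝ,
    (∀ a b : Z × Y,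
      |φ a - φ b| ≤ Real.sqrt (‖(a.1 : E) - (b.1 : E)‖ ^ 2 + ‖(a.2 : F) - (b.2 : F)‖ ^ 2)) ∧
    r = ∫ p, φ p ∂μ - ∫ p, φ p ∂ν}

section Aux

variable {E F : Type*}
    [NormedAddCommGroup E] [MeasurableSpace E] [BorelSpace E]
    [NormedAddCommGroup F] [MeasurableSpace F] [BorelSpace F]
    {Z : Set E} {Y : Set F}

/-- A function satisfying the ℓ²-Lipschitz bound is `√2`-Lipschitz for the
product (max) metric, hence continuous. -/
lemma lip_of_l2 (ψ : Z × Y → ℝ)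
    (hψ : ∀ a b : Z × Y,
      |ψ a - ψ b| ≤ Real.sqrt (‖(a.1 : E) - (b.1 : E)‖ ^ 2 + ‖(a.2 : F) - (b.2 : F)‖ ^ 2)) :
    LipschitzWith (Real.toNNReal (Real.sqrt 2)) ψ := by
  apply LipschitzWith.of_dist_le_mul
  intro a b
  rw [Real.dist_eq, Real.coe_toNNReal _ (Real.sqrt_nonneg 2)]
  have h1 : ‖(a.1 : E) - (b.1 : E)‖ ≤ dist a b := by
    rw [← dist_eq_norm, ← Subtype.dist_eq]
    exact le_trans (le_max_left _ _) (le_of_eq Prod.dist_eq.symm)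
  have h2 : ‖(a.2 : F) - (b.2 : F)‖ ≤ dist a b := by
    rw [← dist_eq_norm, ← Subtype.dist_eq]
    exact le_trans (le_max_right _ _) (le_of_eq Prod.dist_eq.symm)
  have hd : (0:ℝ) ≤ dist a b := dist_nonneg
  refine (hψ a b).trans ?_
  have hsum : ‖(a.1 : E) - (b.1 : E)‖ ^ 2 + ‖(a.2 : F) - (b.2 : F)‖ ^ 2
      ≤ 2 * dist a b ^ 2 := by
    nlinarith [norm_nonneg ((a.1 : E) - (b.1 : E)), norm_nonneg ((a.2 : F) - (b.2 : F))]
  calc Real.sqrt (‖(a.1 : E) - (b.1 : E)‖ ^ 2 + ‖(a.2 : F) - (b.2 : F)‖ ^ 2)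
      ≤ Real.sqrt (2 * dist a b ^ 2) := Real.sqrt_le_sqrt hsum
    _ = Real.sqrt 2 * dist a b := by
        rw [Real.sqrt_mul (by norm_num : (0:ℝ) ≤ 2), Real.sqrt_sq hd]

/-- Any admissible test function's integral difference is at most `W2 μ ν`. -/
lemma le_W2 (hZ : IsCompact Z) (hY : IsCompact Y) [Nonempty (Z × Y)]
    (μ ν : Measure (Z × Y)) [IsProbabilityMeasure μ] [IsProbabilityMeasure ν]
    (φ : Z × Y → ℝ)
    (hφ : ∀ a b : Z × Y,
      |φ a - φ b| ≤ Real.sqrt (‖(a.1 : E) - (b.1 : E)‖ ^ 2 + ‖(a.2 : F) - (b.2 : F)‖ ^ 2)) :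
    ∫ p, φ p ∂μ - ∫ p, φ p ∂ν ≤ W2 μ ν := by
  haveI : CompactSpace Z := isCompact_iff_compactSpace.mp hZ
  haveI : CompactSpace Y := isCompact_iff_compactSpace.mp hY
  obtain ⟨CZ, hCZ⟩ := hZ.isBounded.exists_norm_le
  obtain ⟨CY, hCY⟩ := hY.isBounded.exists_norm_le
  set D : ℝ := Real.sqrt ((2 * max CZ 0) ^ 2 + (2 * max CY 0) ^ 2) with hDdef
  have hD : ∀ a b : Z × Y,
      Real.sqrt (‖(a.1 : E) - (b.1 : E)‖ ^ 2 + ‖(a.2 : F) - (b.2 : F)‖ ^ 2) ≤ D := by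
    intro a b
    apply Real.sqrt_le_sqrt
    have h1 : ‖(a.1 : E) - (b.1 : E)‖ ≤ 2 * max CZ 0 := by
      have := hCZ _ a.1.2; have := hCZ _ b.1.2
      have := norm_sub_le (a.1 : E) (b.1 : E)
      have : ‖(a.1 : E) - (b.1 : E)‖ ≤ CZ + CZ := by
        calc ‖(a.1 : E) - (b.1 : E)‖ ≤ ‖(a.1 : E)‖ + ‖(b.1 : E)‖ := norm_sub_le _ _
          _ ≤ CZ + CZ := add_le_add (hCZ _ a.1.2) (hCZ _ b.1.2)
      have hle : CZ ≤ max CZ 0 := le_max_left _ _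
      linarith
    have h2 : ‖(a.2 : F) - (b.2 : F)‖ ≤ 2 * max CY 0 := by
      have : ‖(a.2 : F) - (b.2 : F)‖ ≤ CY + CY := by
        calc ‖(a.2 : F) - (b.2 : F)‖ ≤ ‖(a.2 : F)‖ + ‖(b.2 : F)‖ := norm_sub_le _ _
          _ ≤ CY + CY := add_le_add (hCY _ a.2.2) (hCY _ b.2.2)
      have hle : CY ≤ max CY 0 := le_max_left _ _
      linarith
    have hn1 := norm_nonneg ((a.1 : E) - (b.1 : E))
    have hn2 := norm_nonneg ((a.2 : F) - (b.2 : F))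
    nlinarith
  set p₀ : Z × Y := Classical.arbitrary _ with hp₀
  have key : ∀ ψ : Z × Y → ℝ,
      (∀ a b : Z × Y,
        |ψ a - ψ b| ≤ Real.sqrt (‖(a.1 : E) - (b.1 : E)‖ ^ 2 + ‖(a.2 : F) - (b.2 : F)‖ ^ 2)) →
      ∫ p, ψ p ∂μ - ∫ p, ψ p ∂ν ≤ 2 * D := by
    intro ψ hψ
    have hbd : ∀ p, |ψ p - ψ p₀| ≤ D := fun p => (hψ p p₀).trans (hD p p₀)
    have hnorm : ∀ p, ‖ψ p‖ ≤ |ψ p₀| + D := by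
      intro p
      have : |ψ p| ≤ |ψ p - ψ p₀| + |ψ p₀| := by
        calc |ψ p| = |(ψ p - ψ p₀) + ψ p₀| := by ring_nf
          _ ≤ |ψ p - ψ p₀| + |ψ p₀| := abs_add_le _ _
      have := hbd p
      simp only [Real.norm_eq_abs]
      linarith
    have hcont := (lip_of_l2 ψ hψ).continuous
    have hint : ∀ (m : Measure (Z × Y)), IsProbabilityMeasure m → Integrable ψ m := by
      intro m hm
      exact ⟨hcont.aestronglyMeasurable,
        HasFiniteIntegral.of_bounded (C := |ψ p₀| + D) (Filter.Eventually.of_forall hnorm)⟩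
    have hub : ∫ p, ψ p ∂μ ≤ ψ p₀ + D := by
      have : ∫ p, ψ p ∂μ ≤ ∫ _p, (ψ p₀ + D) ∂μ := by
        apply integral_mono (hint μ inferInstance) (integrable_const _)
        intro p
        show ψ p ≤ ψ p₀ + D
        have := abs_le.mp (hbd p)
        linarith [this.1]
      simpa using this
    have hlb : ψ p₀ - D ≤ ∫ p, ψ p ∂ν := by
      have : ∫ _p, (ψ p₀ - D) ∂ν ≤ ∫ p, ψ p ∂ν := by
        apply integral_mono (integrable_const _) (hint ν inferInstance)
        intro p
        show ψ p₀ - D ≤ ψ p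
        have := abs_le.mp (hbd p)
        linarith [this.2]
      simpa using this
    linarith
  have hbdd : BddAbove {r : ℝ | ∃ ψ : Z × Y → ℝ,
      (∀ a b : Z × Y,
        |ψ a - ψ b| ≤ Real.sqrt (‖(a.1 : E) - (b.1 : E)‖ ^ 2 + ‖(a.2 : F) - (b.2 : F)‖ ^ 2)) ∧
      r = ∫ p, ψ p ∂μ - ∫ p, ψ p ∂ν} := by
    refine ⟨2 * D, ?_⟩
    rintro r ⟨ψ, hψ, rfl⟩
    exact key ψ hψ
  exact le_csSup hbdd ⟨φ, hφ, rfl⟩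

end Aux

/-- Deterministic core of the generalization bound: if the empirical measures `P̂`, `Q̂`
satisfy `W(P̂, P_t) ≤ ε₁` and `W(Q̂, Q_t) ≤ ε₂`, then
`|R_{Q_t}(f) − R_{P_t}(f)| ≤ κ·sqrt(λ²+1)·(W(P̂, Q̂) + ε₁ + ε₂)`. -/
theorem risk_gap_le_empirical_wasserstein {E F : Type*}
    [NormedAddCommGroup E] [NormedSpace ℝ E] [MeasurableSpace E] [BorelSpace E]
    [NormedAddCommGroup F] [NormedSpace ℝ F] [MeasurableSpace F] [BorelSpace F]
    (Z : Set E) (Y : Set F) (hZ : IsCompact Z) (hY : IsCompact Y)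
    (κ lam : ℝ) (hκ : 0 ≤ κ) (hlam : 0 ≤ lam)
    (L : Y → Y → ℝ) (hLc : Continuous fun p : Y × Y => L p.1 p.2)
    (hL₁ : ∀ y y₁ y₂ : Y, |L y₁ y - L y₂ y| ≤ κ * ‖(y₁ : F) - (y₂ : F)‖)
    (hL₂ : ∀ y y₁ y₂ : Y, |L y y₁ - L y y₂| ≤ κ * ‖(y₁ : F) - (y₂ : F)‖)
    (f : Z → Y) (hf : ∀ z z' : Z, ‖(f z : F) - (f z' : F)‖ ≤ lam * ‖(z : E) - (z' : E)‖)
    (Pt Qt Phat Qhat : Measure (Z × Y))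
    [IsProbabilityMeasure Pt] [IsProbabilityMeasure Qt]
    [IsProbabilityMeasure Phat] [IsProbabilityMeasure Qhat]
    (ε₁ ε₂ : ℝ) (hε₁ : 0 ≤ ε₁) (hε₂ : 0 ≤ ε₂)
    (hP : W2 Phat Pt ≤ ε₁) (hQ : W2 Qhat Qt ≤ ε₂) :
    |(∫ p : Z × Y, L (f p.1) p.2 ∂Qt) - ∫ p : Z × Y, L (f p.1) p.2 ∂Pt| ≤
      κ * Real.sqrt (lam ^ 2 + 1) * (W2 Phat Qhat + ε₁ + ε₂) := by
  haveI : Nonempty (Z × Y) := by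
    by_contra h
    rw [not_nonempty_iff] at h
    have h1 : Pt Set.univ = 1 := measure_univ
    rw [Set.univ_eq_empty_iff.mpr h] at h1
    simp at h1
  set c : ℝ := κ * Real.sqrt (lam ^ 2 + 1) with hc
  set g : Z × Y → ℝ := fun p => L (f p.1) p.2 with hg
  -- g is c-Lipschitz for the ℓ² metric
  have hsq : (1:ℝ) ≤ Real.sqrt (lam ^ 2 + 1) := by
    calc (1:ℝ) = Real.sqrt 1 := by simp
      _ ≤ Real.sqrt (lam ^ 2 + 1) := Real.sqrt_le_sqrt (by nlinarith)
  have hglip : ∀ a b : Z × Y,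
      |g a - g b| ≤ c * Real.sqrt (‖(a.1 : E) - (b.1 : E)‖ ^ 2 + ‖(a.2 : F) - (b.2 : F)‖ ^ 2) := by
    intro a b
    have h1 : |g a - g b| ≤ κ * (lam * ‖(a.1 : E) - (b.1 : E)‖ + ‖(a.2 : F) - (b.2 : F)‖) := by
      have t1 : |L (f a.1) a.2 - L (f b.1) a.2| ≤ κ * ‖(f a.1 : F) - (f b.1 : F)‖ :=
        hL₁ a.2 (f a.1) (f b.1)
      have t2 : |L (f b.1) a.2 - L (f b.1) b.2| ≤ κ * ‖(a.2 : F) - (b.2 : F)‖ :=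
        hL₂ (f b.1) a.2 b.2
      have t3 : ‖(f a.1 : F) - (f b.1 : F)‖ ≤ lam * ‖(a.1 : E) - (b.1 : E)‖ := hf a.1 b.1
      have := abs_sub_le (L (f a.1) a.2) (L (f b.1) a.2) (L (f b.1) b.2)
      have hκt := mul_le_mul_of_nonneg_left t3 hκ
      simp only [hg]
      nlinarith
    refine h1.trans ?_
    set x := ‖(a.1 : E) - (b.1 : E)‖
    set y := ‖(a.2 : F) - (b.2 : F)‖
    have hx : 0 ≤ x := norm_nonneg _
    have hy : 0 ≤ y := norm_nonneg _
    have hcs : lam * x + y ≤ Real.sqrt (lam ^ 2 + 1) * Real.sqrt (x ^ 2 + y ^ 2) := by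
      have h2 : (lam * x + y) ^ 2 ≤ (lam ^ 2 + 1) * (x ^ 2 + y ^ 2) := by
        nlinarith [sq_nonneg (lam * y - x)]
      calc lam * x + y = Real.sqrt ((lam * x + y) ^ 2) :=
            (Real.sqrt_sq (by positivity)).symm
        _ ≤ Real.sqrt ((lam ^ 2 + 1) * (x ^ 2 + y ^ 2)) := Real.sqrt_le_sqrt h2
        _ = Real.sqrt (lam ^ 2 + 1) * Real.sqrt (x ^ 2 + y ^ 2) :=
            Real.sqrt_mul (by positivity) _
    rw [hc, mul_assoc]
    exact mul_le_mul_of_nonneg_left hcs hκ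
  rcases eq_or_lt_of_le hκ with hκ0 | hκpos
  · -- κ = 0 : both sides are zero
    have hgconst : ∀ p : Z × Y, g p = g (Classical.arbitrary _) := by
      intro p
      have := hglip p (Classical.arbitrary _)
      rw [hc, ← hκ0] at this
      simp only [zero_mul] at this
      have := abs_nonpos_iff.mp (le_trans this (le_of_eq rfl))
      linarith [abs_nonneg (g p - g (Classical.arbitrary (Z × Y))), sub_eq_zero.mp this]
    have e1 : (∫ p : Z × Y, L (f p.1) p.2 ∂Qt) = g (Classical.arbitrary _) := by
      rw [show (fun p : Z × Y => L (f p.1) p.2) = fun _ => g (Classical.arbitrary _) from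
        funext hgconst]
      simp
    have e2 : (∫ p : Z × Y, L (f p.1) p.2 ∂Pt) = g (Classical.arbitrary _) := by
      rw [show (fun p : Z × Y => L (f p.1) p.2) = fun _ => g (Classical.arbitrary _) from
        funext hgconst]
      simp
    rw [e1, e2]
    simp [hc, ← hκ0]
  · have hcpos : 0 < c := by
      rw [hc]
      exact mul_pos hκpos (lt_of_lt_of_le one_pos hsq)
    set φ : Z × Y → ℝ := fun p => c⁻¹ * g p with hφdef
    have hφlip : ∀ a b : Z × Y,
        |φ a - φ b| ≤ Real.sqrt (‖(a.1 : E) - (b.1 : E)‖ ^ 2 + ‖(a.2 : F) - (b.2 : F)‖ ^ 2) := by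
      intro a b
      have : |φ a - φ b| = c⁻¹ * |g a - g b| := by
        rw [hφdef]
        simp only [← mul_sub, abs_mul, abs_inv, abs_of_pos hcpos]
      rw [this]
      rw [inv_mul_le_iff₀ hcpos]
      exact hglip a b
    have hφneg : ∀ a b : Z × Y,
        |(fun p => -φ p) a - (fun p => -φ p) b| ≤
          Real.sqrt (‖(a.1 : E) - (b.1 : E)‖ ^ 2 + ‖(a.2 : F) - (b.2 : F)‖ ^ 2) := by
      intro a b
      simp only [neg_sub_neg]
      rw [abs_sub_comm]
      exact hφlip a b
    -- integral identities
    have hint : ∀ m : Measure (Z × Y), ∫ p, g p ∂m = c * ∫ p, φ p ∂m := by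
      intro m
      rw [hφdef, integral_const_mul, ← mul_assoc, mul_inv_cancel₀ (ne_of_gt hcpos), one_mul]
    have hintφ : ∀ m : Measure (Z × Y), ∫ p, (fun q => -φ q) p ∂m = -∫ p, φ p ∂m := by
      intro m
      exact integral_neg _
    -- the six bounds
    have b1 : ∫ p, φ p ∂Phat - ∫ p, φ p ∂Pt ≤ ε₁ :=
      le_trans (le_W2 hZ hY Phat Pt φ hφlip) hP
    have b1' : ∫ p, φ p ∂Pt - ∫ p, φ p ∂Phat ≤ ε₁ := by
      have := le_trans (le_W2 hZ hY Phat Pt (fun p => -φ p) hφneg) hP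
      rw [hintφ, hintφ] at this
      linarith
    have b2 : ∫ p, φ p ∂Qhat - ∫ p, φ p ∂Qt ≤ ε₂ :=
      le_trans (le_W2 hZ hY Qhat Qt φ hφlip) hQ
    have b2' : ∫ p, φ p ∂Qt - ∫ p, φ p ∂Qhat ≤ ε₂ := by
      have := le_trans (le_W2 hZ hY Qhat Qt (fun p => -φ p) hφneg) hQ
      rw [hintφ, hintφ] at this
      linarith
    have b3 : ∫ p, φ p ∂Phat - ∫ p, φ p ∂Qhat ≤ W2 Phat Qhat :=
      le_W2 hZ hY Phat Qhat φ hφlip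
    have b3' : ∫ p, φ p ∂Qhat - ∫ p, φ p ∂Phat ≤ W2 Phat Qhat := by
      have := le_W2 hZ hY Phat Qhat (fun p => -φ p) hφneg
      rw [hintφ, hintφ] at this
      linarith
    have hQg : (∫ p : Z × Y, L (f p.1) p.2 ∂Qt) = c * ∫ p, φ p ∂Qt := hint Qt
    have hPg : (∫ p : Z × Y, L (f p.1) p.2 ∂Pt) = c * ∫ p, φ p ∂Pt := hint Pt
    rw [hQg, hPg, ← mul_sub, abs_mul, abs_of_pos hcpos]
    apply mul_le_mul_of_nonneg_left _ (le_of_lt hcpos)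
    rw [abs_le]
    constructor
    · have : ∫ p, φ p ∂Pt - ∫ p, φ p ∂Qt =
        (∫ p, φ p ∂Pt - ∫ p, φ p ∂Phat) + (∫ p, φ p ∂Phat - ∫ p, φ p ∂Qhat) +
        (∫ p, φ p ∂Qhat - ∫ p, φ p ∂Qt) := by ring
      linarith
    · have : ∫ p, φ p ∂Qt - ∫ p, φ p ∂Pt =
        (∫ p, φ p ∂Qt - ∫ p, φ p ∂Qhat) + (∫ p, φ p ∂Qhat - ∫ p, φ p ∂Phat) +
        (∫ p, φ p ∂Phat - ∫ p, φ p ∂Pt) := by ring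
      linarith
end
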